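/- arXiv:2604.17904 — 3 statements merged into one kernel-verified Lean document; each statement's English description precedes it below -/
import Mathlib

section
/- Let (a_n)_n ∈ ℂ~_s be such that the hyperseries Σ_{n∈ℕ~} a_n converges to s ∈ ℂ~, and let M ∈ ℕ~. Then the hypersequence N ∈ ℕ~ ↦ Σ_{n=0}^{N+M} a_n has hyperlimit s, the hypersequence N ∈ ℕ~ ↦ Σ_{n=N}^{N+M} a_n has hyperlimit 0, and in particular the hypersequence (a_n)_{n∈ℕ~} has hyperlimit 0. -/
open Filter

noncomputable section

/-- `P ε` holds for all ε small. -/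
def EvS (P : ℝ → Prop) : Prop := ∃ ε₀ : ℝ, 0 < ε₀ ∧ ε₀ ≤ 1 ∧ ∀ ε : ℝ, 0 < ε → ε ≤ ε₀ → P ε

theorem EvS.mono {P Q : ℝ → Prop} (h : EvS P) (h2 : ∀ ε, 0 < ε → ε ≤ 1 → P ε → Q ε) : EvS Q := by
  obtain ⟨e, he, he1, hP⟩ := h
  exact ⟨e, he, he1, fun ε hε hεe => h2 ε hε (hεe.trans he1) (hP ε hε hεe)⟩

theorem EvS.and {P Q : ℝ → Prop} (h : EvS P) (h' : EvS Q) : EvS fun ε => P ε ∧ Q ε := by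
  obtain ⟨e, he, he1, hP⟩ := h
  obtain ⟨e', he', he1', hQ⟩ := h'
  exact ⟨min e e', lt_min he he', le_trans (min_le_left _ _) he1, fun ε hε hm =>
    ⟨hP ε hε (le_trans hm (min_le_left _ _)), hQ ε hε (le_trans hm (min_le_right _ _))⟩⟩

/-- A gauge: a nonincreasing net of reals in (0,1] tending to 0. -/
structure Gauge where
  ρ : ℝ → ℝ
  pos : ∀ ε : ℝ, 0 < ε → ε ≤ 1 → 0 < ρ ε
  le_one : ∀ ε : ℝ, 0 < ε → ε ≤ 1 → ρ ε ≤ 1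
  anti : ∀ ε ε' : ℝ, 0 < ε → ε ≤ ε' → ε' ≤ 1 → ρ ε' ≤ ρ ε
  to_zero : Tendsto ρ (nhdsWithin 0 (Set.Ioi 0)) (nhds 0)

namespace Gauge

theorem evs_le (g : Gauge) {δ : ℝ} (hδ : 0 < δ) : EvS fun ε => g.ρ ε ≤ δ := by
  have h := g.to_zero.eventually_lt_const hδ
  rw [eventually_nhdsWithin_iff, Metric.eventually_nhds_iff] at h
  obtain ⟨e, he, hP⟩ := h
  refine ⟨min (e / 2) 1, by positivity, min_le_right _ _, fun ε hε hεe => ?_⟩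
  have hd : dist ε 0 < e := by
    rw [Real.dist_eq, sub_zero, abs_of_pos hε]
    have h1 : ε ≤ e / 2 := le_trans hεe (min_le_left _ _)
    linarith
  exact (hP hd (Set.mem_Ioi.mpr hε)).le

variable {𝕜 : Type} [RCLike 𝕜]

/-- ρ-moderate nets. -/
def Mod (g : Gauge) (x : ℝ → 𝕜) : Prop := ∃ N : ℕ, EvS fun ε => ‖x ε‖ ≤ g.ρ ε ^ (-(N : ℤ))

/-- ρ-negligible nets. -/
def Negl (g : Gauge) (x : ℝ → 𝕜) : Prop := ∀ q : ℕ, EvS fun ε => ‖x ε‖ ≤ g.ρ ε ^ q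

theorem Negl.mod {g : Gauge} {x : ℝ → 𝕜} (h : g.Negl x) : g.Mod x := by
  refine ⟨0, (h 0).mono fun ε hε hε1 hx => ?_⟩
  simpa using hx

theorem negl_sub_self (g : Gauge) (x : ℝ → 𝕜) : g.Negl fun ε => x ε - x ε := fun q =>
  ⟨1, one_pos, le_refl 1, fun ε hε hε1 => by
    simp only [sub_self, norm_zero]
    exact pow_nonneg (g.pos ε hε hε1).le q⟩

theorem negl_of_evs_eq (g : Gauge) {x y : ℝ → 𝕜} (h : EvS fun ε => x ε = y ε) :
    g.Negl fun ε => x ε - y ε := fun q => h.mono fun ε hε hε1 he => by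
  show ‖x ε - y ε‖ ≤ _
  rw [he, sub_self, norm_zero]; exact pow_nonneg (g.pos ε hε hε1).le q

theorem Negl.symm_sub {g : Gauge} {x y : ℝ → 𝕜} (h : g.Negl fun ε => x ε - y ε) :
    g.Negl fun ε => y ε - x ε := fun q => (h q).mono fun ε _ _ hx => by rwa [norm_sub_rev]

theorem Negl.add {g : Gauge} {x y : ℝ → 𝕜} (hx : g.Negl x) (hy : g.Negl y) :
    g.Negl fun ε => x ε + y ε := by
  intro q
  refine (((hx (q+1)).and (hy (q+1))).and (g.evs_le (by norm_num : (0:ℝ) < 1/2))).mono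
    fun ε hε hε1 h => ?_
  obtain ⟨⟨h1, h2⟩, h3⟩ := h
  have hρ := g.pos ε hε hε1
  calc ‖x ε + y ε‖ ≤ ‖x ε‖ + ‖y ε‖ := norm_add_le _ _
    _ ≤ g.ρ ε ^ (q+1) + g.ρ ε ^ (q+1) := add_le_add h1 h2
    _ = 2 * g.ρ ε * g.ρ ε ^ q := by ring
    _ ≤ 1 * g.ρ ε ^ q := by
        apply mul_le_mul_of_nonneg_right _ (pow_nonneg hρ.le q)
        linarith
    _ = g.ρ ε ^ q := one_mul _

theorem Negl.neg {g : Gauge} {y : ℝ → 𝕜} (hy : g.Negl y) : g.Negl fun ε => -(y ε) :=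
  fun q => (hy q).mono fun ε _ _ h => by
    show ‖-(y ε)‖ ≤ _
    rwa [norm_neg]

theorem Negl.sub {g : Gauge} {x y : ℝ → 𝕜} (hx : g.Negl x) (hy : g.Negl y) :
    g.Negl fun ε => x ε - y ε := by
  have h := hx.add hy.neg
  have heq : (fun ε => x ε + -(y ε)) = fun ε => x ε - y ε := by funext ε; ring
  rwa [heq] at h

theorem Negl.triangle {g : Gauge} {x y z : ℝ → 𝕜} (h1 : g.Negl fun ε => x ε - y ε)
    (h2 : g.Negl fun ε => y ε - z ε) : g.Negl fun ε => x ε - z ε := by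
  have h := h1.add h2
  have heq : (fun ε => (x ε - y ε) + (y ε - z ε)) = fun ε => x ε - z ε := by
    funext ε; ring
  rwa [heq] at h

end Gauge

namespace Gauge

variable {𝕜 : Type} [RCLike 𝕜]

theorem zpow_neg_le (g : Gauge) {ε : ℝ} (hε : 0 < ε) (hε1 : ε ≤ 1) {a b : ℕ} (h : a ≤ b) :
    g.ρ ε ^ (-(a:ℤ)) ≤ g.ρ ε ^ (-(b:ℤ)) := by
  apply zpow_le_zpow_right_of_le_one₀ (g.pos ε hε hε1) (g.le_one ε hε hε1)
  omega

theorem Mod.of_norm_le {g : Gauge} {x : ℝ → 𝕜} {y : ℝ → ℝ} (hy : g.Mod y)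
    (h : ∀ ε, 0 < ε → ε ≤ 1 → ‖x ε‖ ≤ |y ε|) : g.Mod x := by
  obtain ⟨N, hN⟩ := hy
  exact ⟨N, hN.mono fun ε hε hε1 hb => le_trans (h ε hε hε1) (by rwa [Real.norm_eq_abs] at hb)⟩

theorem Mod.add {g : Gauge} {x y : ℝ → 𝕜} (hx : g.Mod x) (hy : g.Mod y) :
    g.Mod fun ε => x ε + y ε := by
  obtain ⟨N, hN⟩ := hx; obtain ⟨M, hM⟩ := hy
  refine ⟨N + M + 1, ((hN.and hM).and (g.evs_le (by norm_num : (0:ℝ) < 1/2))).mono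
    fun ε hε hε1 h => ?_⟩
  obtain ⟨⟨h1, h2⟩, h3⟩ := h
  have hρ := g.pos ε hε hε1
  have e1 : g.ρ ε ^ (-(N:ℤ)) ≤ g.ρ ε ^ (-((N+M:ℕ):ℤ)) := g.zpow_neg_le hε hε1 (by omega)
  have e2 : g.ρ ε ^ (-(M:ℤ)) ≤ g.ρ ε ^ (-((N+M:ℕ):ℤ)) := g.zpow_neg_le hε hε1 (by omega)
  have key : g.ρ ε ^ (-((N+M:ℕ):ℤ)) = g.ρ ε ^ (-((N+M+1:ℕ):ℤ)) * g.ρ ε := by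
    rw [← zpow_add_one₀ hρ.ne']
    congr 1
    push_cast
    ring
  have hpos : (0:ℝ) < g.ρ ε ^ (-((N+M+1:ℕ):ℤ)) := zpow_pos hρ _
  calc ‖x ε + y ε‖ ≤ ‖x ε‖ + ‖y ε‖ := norm_add_le _ _
    _ ≤ g.ρ ε ^ (-((N+M:ℕ):ℤ)) + g.ρ ε ^ (-((N+M:ℕ):ℤ)) := add_le_add (h1.trans e1) (h2.trans e2)
    _ = 2 * g.ρ ε * g.ρ ε ^ (-((N+M+1:ℕ):ℤ)) := by rw [key]; ring
    _ ≤ 1 * g.ρ ε ^ (-((N+M+1:ℕ):ℤ)) := by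
        apply mul_le_mul_of_nonneg_right _ hpos.le
        linarith
    _ = g.ρ ε ^ (-((N+M+1:ℕ):ℤ)) := one_mul _

theorem Mod.neg {g : Gauge} {x : ℝ → 𝕜} (hx : g.Mod x) : g.Mod fun ε => -(x ε) := by
  obtain ⟨N, hN⟩ := hx
  exact ⟨N, hN.mono fun ε _ _ h => by rwa [norm_neg]⟩

theorem Mod.sub {g : Gauge} {x y : ℝ → 𝕜} (hx : g.Mod x) (hy : g.Mod y) :
    g.Mod fun ε => x ε - y ε := by
  have h := hx.add hy.neg
  have heq : (fun ε => x ε + -(y ε)) = fun ε => x ε - y ε := by funext ε; ring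
  rwa [heq] at h

theorem Mod.mul {g : Gauge} {x y : ℝ → 𝕜} (hx : g.Mod x) (hy : g.Mod y) :
    g.Mod fun ε => x ε * y ε := by
  obtain ⟨N, hN⟩ := hx; obtain ⟨M, hM⟩ := hy
  refine ⟨N + M, (hN.and hM).mono fun ε hε hε1 h => ?_⟩
  obtain ⟨h1, h2⟩ := h
  have hρ := g.pos ε hε hε1
  calc ‖x ε * y ε‖ = ‖x ε‖ * ‖y ε‖ := norm_mul _ _
    _ ≤ g.ρ ε ^ (-(N:ℤ)) * g.ρ ε ^ (-(M:ℤ)) :=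
        mul_le_mul h1 h2 (norm_nonneg _) (zpow_nonneg hρ.le _)
    _ = g.ρ ε ^ (-((N+M:ℕ):ℤ)) := by rw [← zpow_add₀ hρ.ne']; congr 1; push_cast; ring

theorem Mod.norm {g : Gauge} {x : ℝ → 𝕜} (hx : g.Mod x) : g.Mod fun ε => ‖x ε‖ := by
  obtain ⟨N, hN⟩ := hx
  exact ⟨N, hN.mono fun ε _ _ h => by rwa [norm_norm]⟩

theorem Negl.mul_mod {g : Gauge} {x y : ℝ → 𝕜} (hx : g.Negl x) (hy : g.Mod y) :
    g.Negl fun ε => x ε * y ε := by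
  obtain ⟨M, hM⟩ := hy
  intro q
  refine ((hx (q + M)).and hM).mono fun ε hε hε1 h => ?_
  obtain ⟨h1, h2⟩ := h
  have hρ := g.pos ε hε hε1
  calc ‖x ε * y ε‖ = ‖x ε‖ * ‖y ε‖ := norm_mul _ _
    _ ≤ g.ρ ε ^ (q+M) * g.ρ ε ^ (-(M:ℤ)) :=
        mul_le_mul h1 h2 (norm_nonneg _) (pow_nonneg hρ.le _)
    _ = g.ρ ε ^ q := by
        rw [← zpow_natCast (g.ρ ε) (q+M), ← zpow_add₀ hρ.ne', ← zpow_natCast (g.ρ ε) q]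
        congr 1; push_cast; ring

theorem mod_const (g : Gauge) (c : 𝕜) (hc : ‖c‖ ≤ 1) : g.Mod fun _ => c := by
  refine ⟨0, 1, one_pos, le_refl 1, fun ε hε hε1 => ?_⟩
  simpa using hc

theorem mod_pow (g : Gauge) (q : ℕ) : g.Mod fun ε => g.ρ ε ^ q := by
  refine ⟨0, 1, one_pos, le_refl 1, fun ε hε hε1 => ?_⟩
  have hρ := g.pos ε hε hε1
  show ‖g.ρ ε ^ q‖ ≤ _
  rw [Real.norm_eq_abs, abs_of_nonneg (pow_nonneg hρ.le q)]
  simpa using pow_le_one₀ hρ.le (g.le_one ε hε hε1)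

theorem mod_zpow_neg (g : Gauge) (q : ℕ) : g.Mod fun ε => g.ρ ε ^ (-(q:ℤ)) := by
  refine ⟨q, 1, one_pos, le_refl 1, fun ε hε hε1 => ?_⟩
  have hρ := g.pos ε hε hε1
  show ‖g.ρ ε ^ (-(q:ℤ))‖ ≤ _
  rw [Real.norm_eq_abs, abs_of_nonneg (zpow_nonneg hρ.le _)]

/-- Hypernatural moderateness. -/
def NMod (g : Gauge) (n : ℝ → ℕ) : Prop := g.Mod fun ε => (n ε : ℝ)

end Gauge

instance gSetoid (g : Gauge) (𝕜 : Type) [RCLike 𝕜] : Setoid {x : ℝ → 𝕜 // g.Mod x} where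
  r a b := g.Negl fun ε => a.1 ε - b.1 ε
  iseqv := ⟨fun a => g.negl_sub_self a.1, fun h => h.symm_sub, fun h h' => h.triangle h'⟩

instance natSetoid (g : Gauge) : Setoid {n : ℝ → ℕ // g.NMod n} where
  r a b := g.Negl fun ε => (a.1 ε : ℝ) - (b.1 ε : ℝ)
  iseqv := ⟨fun a => g.negl_sub_self _, fun h => h.symm_sub, fun h h' => h.triangle h'⟩

/-- The ring of Robinson-Colombeau generalized numbers (ℂ~ for 𝕜 = ℂ, ℝ~ for 𝕜 = ℝ). -/
abbrev GQ (g : Gauge) (𝕜 : Type) [RCLike 𝕜] := Quotient (gSetoid g 𝕜)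

abbrev Ct (g : Gauge) := GQ g ℂ
abbrev Rt (g : Gauge) := GQ g ℝ

/-- The set of hypernatural numbers ℕ~. -/
abbrev Nt (g : Gauge) := Quotient (natSetoid g)

def GQ.mk (g : Gauge) {𝕜 : Type} [RCLike 𝕜] (x : ℝ → 𝕜) (h : g.Mod x) : GQ g 𝕜 :=
  Quotient.mk (gSetoid g 𝕜) ⟨x, h⟩

/-- `x` is a representative of the generalized number `z`. -/
def IsRep (g : Gauge) {𝕜 : Type} [RCLike 𝕜] (x : ℝ → 𝕜) (z : GQ g 𝕜) : Prop :=
  ∃ h : g.Mod x, GQ.mk g x h = z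

def Nt.mk (g : Gauge) (n : ℝ → ℕ) (h : g.NMod n) : Nt g := Quotient.mk (natSetoid g) ⟨n, h⟩

def Nt.IsRep (g : Gauge) (n : ℝ → ℕ) (m : Nt g) : Prop := ∃ h : g.NMod n, Nt.mk g n h = m

/-- dρ^q as an element of ℝ~. -/
def Gauge.dpow (g : Gauge) (q : ℕ) : Rt g := GQ.mk g (fun ε => g.ρ ε ^ q) (g.mod_pow q)

/-- dρ^(−q) as an element of ℝ~. -/
def Gauge.dpowNeg (g : Gauge) (q : ℕ) : Rt g := GQ.mk g (fun ε => g.ρ ε ^ (-(q:ℤ))) (g.mod_zpow_neg q)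

def GQ.zero (g : Gauge) (𝕜 : Type) [RCLike 𝕜] : GQ g 𝕜 :=
  GQ.mk g (fun _ => 0) (g.mod_const 0 (by simp))

def GQ.one (g : Gauge) (𝕜 : Type) [RCLike 𝕜] : GQ g 𝕜 :=
  GQ.mk g (fun _ => 1) (g.mod_const 1 (by simp))

variable {𝕜 : Type} [RCLike 𝕜]

/-- Order relation on ℝ~ (via some representatives). -/
def Rt.le (g : Gauge) (x y : Rt g) : Prop :=
  ∃ a b : {u : ℝ → ℝ // g.Mod u}, Quotient.mk (gSetoid g ℝ) a = x ∧
    Quotient.mk (gSetoid g ℝ) b = y ∧ EvS fun ε => a.1 ε ≤ b.1 ε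

/-- Strict order relation on ℝ~: `x < y` iff `y − x ≥ dρ^m` for some m. -/
def Rt.lt (g : Gauge) (x y : Rt g) : Prop :=
  ∃ a b : {u : ℝ → ℝ // g.Mod u}, Quotient.mk (gSetoid g ℝ) a = x ∧
    Quotient.mk (gSetoid g ℝ) b = y ∧ ∃ m : ℕ, EvS fun ε => g.ρ ε ^ m ≤ b.1 ε - a.1 ε

/-- Order on ℕ~. -/
def Nt.le (g : Gauge) (m n : Nt g) : Prop :=
  ∃ a b : {k : ℝ → ℕ // g.NMod k}, Quotient.mk (natSetoid g) a = m ∧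
    Quotient.mk (natSetoid g) b = n ∧ EvS fun ε => a.1 ε ≤ b.1 ε

/-- The relation `|z − w| < r` between generalized numbers, r ∈ ℝ~. -/
def GQ.absLt (g : Gauge) (z w : GQ g 𝕜) (r : Rt g) : Prop :=
  ∃ a b : {x : ℝ → 𝕜 // g.Mod x}, ∃ u : {x : ℝ → ℝ // g.Mod x},
    Quotient.mk (gSetoid g 𝕜) a = z ∧ Quotient.mk (gSetoid g 𝕜) b = w ∧
    Quotient.mk (gSetoid g ℝ) u = r ∧
    ∃ m : ℕ, EvS fun ε => ‖a.1 ε - b.1 ε‖ + g.ρ ε ^ m ≤ u.1 ε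

/-- The relation `|z − w| ≤ r`. -/
def GQ.absLe (g : Gauge) (z w : GQ g 𝕜) (r : Rt g) : Prop :=
  ∃ a b : {x : ℝ → 𝕜 // g.Mod x}, ∃ u : {x : ℝ → ℝ // g.Mod x},
    Quotient.mk (gSetoid g 𝕜) a = z ∧ Quotient.mk (gSetoid g 𝕜) b = w ∧
    Quotient.mk (gSetoid g ℝ) u = r ∧ EvS fun ε => ‖a.1 ε - b.1 ε‖ ≤ u.1 ε

/-- `x ∈ ℂ~` is invertible. -/
def GQ.Invertible (g : Gauge) (x : GQ g 𝕜) : Prop :=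
  ∃ a : {u : ℝ → 𝕜 // g.Mod u}, Quotient.mk (gSetoid g 𝕜) a = x ∧
    ∃ m : ℕ, EvS fun ε => g.ρ ε ^ m ≤ ‖a.1 ε‖

/-- l is the hyperlimit of the hypersequence a. -/
def HyperLim (g : Gauge) (a : Nt g → GQ g 𝕜) (l : GQ g 𝕜) : Prop :=
  ∀ q : ℕ, ∃ M : Nt g, ∀ n : Nt g, Nt.le g M n → GQ.absLt g (a n) l (g.dpow q)

/-- ρ-moderate over hypersums. -/
def Gauge.SMod (g : Gauge) (A : ℕ → ℝ → 𝕜) : Prop :=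
  ∀ N : ℝ → ℕ, g.NMod N → g.Mod fun ε => ∑ n ∈ Finset.range (N ε + 1), A n ε

/-- Hyperseries equivalence of coefficient nets. -/
def Gauge.SEquiv (g : Gauge) (A B : ℕ → ℝ → 𝕜) : Prop :=
  ∀ N M : ℝ → ℕ, g.NMod N → g.NMod M →
    g.Negl fun ε => ∑ n ∈ Finset.Icc (N ε) (M ε), (A n ε - B n ε)

theorem nat_eq_of_abs_sub_lt_one {a b : ℕ} (h : |(a:ℝ) - b| < 1) : a = b := by
  rcases lt_trichotomy a b with hlt | he | hgt
  · exfalso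
    have h1 : (a:ℝ) + 1 ≤ b := by exact_mod_cast Nat.succ_le_of_lt hlt
    have h2 := abs_lt.mp h
    linarith [h2.1]
  · exact he
  · exfalso
    have h1 : (b:ℝ) + 1 ≤ a := by exact_mod_cast Nat.succ_le_of_lt hgt
    have h2 := abs_lt.mp h
    linarith [h2.2]

theorem natEqEv (g : Gauge) {N M : ℝ → ℕ} (h : g.Negl fun ε => (N ε : ℝ) - M ε) :
    EvS fun ε => N ε = M ε := by
  refine ((h 1).and (g.evs_le (by norm_num : (0:ℝ) < 1/2))).mono fun ε hε hε1 hh => ?_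
  obtain ⟨h1, h2⟩ := hh
  apply nat_eq_of_abs_sub_lt_one
  have : ‖(N ε : ℝ) - M ε‖ = |(N ε : ℝ) - M ε| := Real.norm_eq_abs _
  rw [this] at h1
  calc |(N ε:ℝ) - M ε| ≤ g.ρ ε ^ 1 := h1
    _ = g.ρ ε := pow_one _
    _ ≤ 1/2 := h2
    _ < 1 := by norm_num

/-- Lift a representative-level construction indexed by hypernaturals to ℕ~. -/
def Nt.lift (g : Gauge) (F : (ℝ → ℕ) → ℝ → 𝕜)
    (hmod : ∀ N, g.NMod N → g.Mod (F N))
    (hcong : ∀ N M : ℝ → ℕ, EvS (fun ε => N ε = M ε) → EvS fun ε => F N ε = F M ε) :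
    Nt g → GQ g 𝕜 :=
  Quotient.lift (fun N => GQ.mk g (F N.1) (hmod N.1 N.2)) (by
    intro a b hab
    apply Quotient.sound
    exact g.negl_of_evs_eq (hcong a.1 b.1 (natEqEv g hab)))

def Nt.lift₂ (g : Gauge) (F : (ℝ → ℕ) → (ℝ → ℕ) → ℝ → 𝕜)
    (hmod : ∀ N M, g.NMod N → g.NMod M → g.Mod (F N M))
    (hcong : ∀ N N' M M' : ℝ → ℕ, EvS (fun ε => N ε = N' ε) → EvS (fun ε => M ε = M' ε) →
      EvS fun ε => F N M ε = F N' M' ε) :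
    Nt g → Nt g → GQ g 𝕜 :=
  Quotient.lift₂ (fun N M => GQ.mk g (F N.1 M.1) (hmod N.1 M.1 N.2 M.2)) (by
    intro a b a' b' ha hb
    apply Quotient.sound
    exact g.negl_of_evs_eq (hcong a.1 a'.1 b.1 b'.1 (natEqEv g ha) (natEqEv g hb)))

/-- The hypersequence of partial hypersums N ↦ Σ_{n=0}^{N} a_n. -/
def partialSum (g : Gauge) (A : ℕ → ℝ → 𝕜) (hA : g.SMod A) : Nt g → GQ g 𝕜 :=
  Nt.lift g (fun N ε => ∑ n ∈ Finset.range (N ε + 1), A n ε) (fun N hN => hA N hN)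
    (fun N M h => h.mono fun ε _ _ he => by rw [he])

/-- The hyperseries Σ_{n∈ℕ~} a_n converges to s. -/
def HSConv (g : Gauge) (A : ℕ → ℝ → 𝕜) (hA : g.SMod A) (s : GQ g 𝕜) : Prop :=
  HyperLim g (partialSum g A hA) s

theorem Gauge.NMod.mono {g : Gauge} {a b : ℝ → ℕ} (hb : g.NMod b) (h : ∀ ε, a ε ≤ b ε) :
    g.NMod a := by
  refine Gauge.Mod.of_norm_le hb fun ε _ _ => ?_
  rw [Real.norm_eq_abs, abs_of_nonneg (Nat.cast_nonneg _), abs_of_nonneg (Nat.cast_nonneg _)]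
  exact_mod_cast h ε

theorem Gauge.SMod.range {g : Gauge} {A : ℕ → ℝ → 𝕜} (hA : g.SMod A) {N : ℝ → ℕ}
    (hN : g.NMod N) : g.Mod fun ε => ∑ n ∈ Finset.range (N ε), A n ε := by
  have hN' : g.NMod fun ε => N ε - 1 := hN.mono fun ε => Nat.sub_le _ _
  obtain ⟨K, hK⟩ := hA _ hN'
  refine ⟨K, hK.mono fun ε hε hε1 h => ?_⟩
  rcases Nat.eq_zero_or_pos (N ε) with h0 | h0
  · show ‖∑ n ∈ Finset.range (N ε), A n ε‖ ≤ _
    rw [h0]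
    simp only [Finset.range_zero, Finset.sum_empty, norm_zero]
    exact le_trans (norm_nonneg _) h
  · have he : N ε - 1 + 1 = N ε := Nat.succ_pred_eq_of_pos h0
    show ‖∑ n ∈ Finset.range (N ε), A n ε‖ ≤ _
    rw [← he]
    exact h

theorem Gauge.SMod.termMod {g : Gauge} {A : ℕ → ℝ → 𝕜} (hA : g.SMod A) {N : ℝ → ℕ}
    (hN : g.NMod N) : g.Mod fun ε => A (N ε) ε := by
  have h := (hA N hN).sub (hA.range hN)
  have heq : (fun ε => (∑ n ∈ Finset.range (N ε + 1), A n ε) -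
      ∑ n ∈ Finset.range (N ε), A n ε) = fun ε => A (N ε) ε := by
    funext ε
    rw [Finset.sum_range_succ]
    ring
  rwa [heq] at h

/-- The extension of the terms of a hyperseries to ℕ~ : n ↦ a_n. -/
def GQ.term (g : Gauge) (A : ℕ → ℝ → 𝕜) (hA : g.SMod A) : Nt g → GQ g 𝕜 :=
  Nt.lift g (fun N ε => A (N ε) ε) (fun _ hN => hA.termMod hN)
    (fun N M h => h.mono fun ε _ _ he => by rw [he])

theorem norm_sum_Icc_le (A : ℕ → 𝕜) (N M : ℕ) :
    ‖∑ n ∈ Finset.Icc N M, A n‖ ≤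
      ‖∑ n ∈ Finset.range (M+1), A n‖ + ‖∑ n ∈ Finset.range N, A n‖ := by
  rcases le_or_gt N (M+1) with h | h
  · have key : (∑ n ∈ Finset.range N, A n) + (∑ n ∈ Finset.Icc N M, A n)
        = ∑ n ∈ Finset.range (M+1), A n := by
      rw [Finset.range_eq_Ico, Finset.range_eq_Ico, ← Finset.Ico_add_one_right_eq_Icc]
      exact Finset.sum_Ico_consecutive A (Nat.zero_le N) h
    have heq : ∑ n ∈ Finset.Icc N M, A n
        = (∑ n ∈ Finset.range (M+1), A n) - ∑ n ∈ Finset.range N, A n := by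
      rw [← key]; ring
    rw [heq]
    exact norm_sub_le _ _
  · rw [Finset.Icc_eq_empty (by omega)]
    simp only [Finset.sum_empty, norm_zero]
    positivity

theorem Gauge.SMod.IccMod {g : Gauge} {A : ℕ → ℝ → 𝕜} (hA : g.SMod A) {N M : ℝ → ℕ}
    (hN : g.NMod N) (hM : g.NMod M) :
    g.Mod fun ε => ∑ n ∈ Finset.Icc (N ε) (M ε), A n ε := by
  have h1 := (hA M hM).norm
  have h2 := (hA.range hN).norm
  refine Gauge.Mod.of_norm_le (h1.add h2) fun ε _ _ => ?_
  have hnn : (0:ℝ) ≤ ‖∑ n ∈ Finset.range (M ε + 1), A n ε‖ + ‖∑ n ∈ Finset.range (N ε), A n ε‖ :=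
    add_nonneg (norm_nonneg _) (norm_nonneg _)
  rw [abs_of_nonneg hnn]
  exact norm_sum_Icc_le _ _ _

/-- The hypersum Σ_{n=N}^{M} a_n as a function of N, M ∈ ℕ~. -/
def hypersum (g : Gauge) (A : ℕ → ℝ → 𝕜) (hA : g.SMod A) : Nt g → Nt g → GQ g 𝕜 :=
  Nt.lift₂ g (fun N M ε => ∑ n ∈ Finset.Icc (N ε) (M ε), A n ε)
    (fun _ _ hN hM => hA.IccMod hN hM)
    (fun N N' M M' h h' => (h.and h').mono fun ε _ _ he => by
      rw [he.1, he.2])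

theorem Gauge.NMod.add {g : Gauge} {a b : ℝ → ℕ} (ha : g.NMod a) (hb : g.NMod b) :
    g.NMod fun ε => a ε + b ε := by
  have h := Gauge.Mod.add (𝕜 := ℝ) ha hb
  show g.Mod fun ε => ((a ε + b ε : ℕ) : ℝ)
  have heq : (fun ε => ((a ε + b ε : ℕ) : ℝ)) = fun ε => ((a ε : ℝ) + (b ε : ℝ)) := by
    funext ε; push_cast; ring
  rwa [heq]

/-- Addition on ℕ~. -/
def Nt.add (g : Gauge) : Nt g → Nt g → Nt g :=
  Quotient.lift₂ (fun a b => Nt.mk g (fun ε => a.1 ε + b.1 ε) (a.2.add b.2)) (by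
    intro a b a' b' ha hb
    apply Quotient.sound
    have h := ((natEqEv g ha).and (natEqEv g hb))
    exact g.negl_of_evs_eq (h.mono fun ε _ _ he => by
      show ((a.1 ε + b.1 ε : ℕ) : ℝ) = ((a'.1 ε + b'.1 ε : ℕ) : ℝ)
      rw [he.1, he.2]))

/-- Subtraction on generalized numbers. -/
def GQ.sub (g : Gauge) : GQ g 𝕜 → GQ g 𝕜 → GQ g 𝕜 :=
  Quotient.lift₂ (fun a b => GQ.mk g (fun ε => a.1 ε - b.1 ε) (a.2.sub b.2)) (by
    intro a b a' b' ha hb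
    apply Quotient.sound
    show g.Negl _
    have h := Gauge.Negl.sub ha hb
    have heq : (fun ε => (a.1 ε - a'.1 ε) - (b.1 ε - b'.1 ε))
        = fun ε => (a.1 ε - b.1 ε) - (a'.1 ε - b'.1 ε) := by funext ε; ring
    rwa [heq] at h)

/-- Multiplication on generalized numbers. -/
def GQ.mul (g : Gauge) : GQ g 𝕜 → GQ g 𝕜 → GQ g 𝕜 :=
  Quotient.lift₂ (fun a b => GQ.mk g (fun ε => a.1 ε * b.1 ε) (a.2.mul b.2)) (by
    intro a b a' b' ha hb
    apply Quotient.sound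
    show g.Negl _
    have h1 : g.Negl fun ε => (a.1 ε - a'.1 ε) * b.1 ε := Gauge.Negl.mul_mod ha b.2
    have h2 : g.Negl fun ε => (b.1 ε - b'.1 ε) * a'.1 ε := Gauge.Negl.mul_mod hb a'.2
    have h := h1.add h2
    have heq : (fun ε => (a.1 ε - a'.1 ε) * b.1 ε + (b.1 ε - b'.1 ε) * a'.1 ε)
        = fun ε => a.1 ε * b.1 ε - a'.1 ε * b'.1 ε := by funext ε; ring
    rwa [heq] at h)

/-- The absolute value |·| : ℂ~ → ℝ~. -/
def GQ.abs (g : Gauge) : GQ g 𝕜 → Rt g :=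
  Quotient.lift (fun a => GQ.mk g (fun ε => ‖a.1 ε‖) a.2.norm) (by
    intro a b hab
    apply Quotient.sound
    show g.Negl _
    intro q
    refine (hab q).mono fun ε _ _ h => ?_
    show ‖‖a.1 ε‖ - ‖b.1 ε‖‖ ≤ _
    rw [Real.norm_eq_abs]
    exact le_trans (abs_norm_sub_norm_le _ _) h)

/-- Weakly ρ-moderate coefficient nets. -/
def Gauge.WMod (g : Gauge) (a : ℕ → ℝ → ℂ) : Prop :=
  ∃ Q R : ℕ, EvS fun ε => ∀ n : ℕ, ‖a n ε‖ ≤ g.ρ ε ^ (-((n * Q + R : ℕ) : ℤ))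

/-- Strong ρ-equivalence of coefficient nets. -/
def Gauge.StrEquiv (g : Gauge) (a b : ℕ → ℝ → ℂ) : Prop :=
  ∀ q r : ℕ, EvS fun ε => ∀ n : ℕ, ‖a n ε - b n ε‖ ≤ g.ρ ε ^ (n * q + r)

/-- The net of radii of convergence r_ε = (limsup_n |a_{nε}|^{1/n})⁻¹ ∈ [0,∞]. -/
def radNet (a : ℕ → ℝ → ℂ) (ε : ℝ) : ENNReal :=
  (Filter.limsup (fun n : ℕ => ENNReal.ofReal (‖a n ε‖ ^ ((n : ℝ)⁻¹))) Filter.atTop)⁻¹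

/-- Condition (i): |z − c| < rad (a_n)_c, as classes (via representatives). -/
def RadLt (g : Gauge) (a : ℕ → ℝ → ℂ) (z c : Ct g) : Prop :=
  ∃ zr cr : ℝ → ℂ, ∃ a' : ℕ → ℝ → ℂ, IsRep g zr z ∧ IsRep g cr c ∧
    g.WMod a' ∧ g.StrEquiv a a' ∧
    ∃ m : ℕ, EvS fun ε => ENNReal.ofReal (‖zr ε - cr ε‖ + g.ρ ε ^ m) ≤ radNet a' ε

/-- The coefficient net of the hyper-power series Σ a_n (z−c)^n. -/
def PSeriesNet (a : ℕ → ℝ → ℂ) (zr cr : ℝ → ℂ) : ℕ → ℝ → ℂ :=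
  fun n ε => a n ε * (zr ε - cr ε) ^ n

/-- Conditions (ii)-(iv) of the definition of the set of convergence, for given
representatives. -/
def ConvConds (g : Gauge) (a : ℕ → ℝ → ℂ) (zr cr : ℝ → ℂ) (z : Ct g) : Prop :=
  ∃ hS : g.SMod (PSeriesNet a zr cr),
    (EvS fun ε => Summable fun n : ℕ => PSeriesNet a zr cr n ε) ∧
    (∃ hm : g.Mod fun ε => ∑' n : ℕ, PSeriesNet a zr cr n ε,
      HyperLim g (partialSum g _ hS) (GQ.mk g _ hm)) ∧
    (∀ zr' : ℝ → ℂ, IsRep g zr' z →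
      (EvS fun ε => Summable fun n : ℕ => (n : ℂ) * a n ε * (zr' ε - cr ε) ^ (n - 1)) ∧
      g.Mod fun ε => ∑' n : ℕ, (n : ℂ) * a n ε * (zr' ε - cr ε) ^ (n - 1))

/-- The set of convergence σ((a_n)_c, c) of a hyper-power series. -/
def convSet (g : Gauge) (a : ℕ → ℝ → ℂ) (c : Ct g) : Set (Ct g) :=
  { z | RadLt g a z c ∧
      ∃ zr cr : ℝ → ℂ, ∃ a' : ℕ → ℝ → ℂ, IsRep g zr z ∧ IsRep g cr c ∧
        g.WMod a' ∧ g.StrEquiv a a' ∧ ConvConds g a' zr cr z }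

/-- Sharply open subsets of ℂ~. -/
def SharplyOpen (g : Gauge) (U : Set (Ct g)) : Prop :=
  ∀ z ∈ U, ∃ r : Rt g, Rt.lt g (GQ.zero g ℝ) r ∧ ∀ w : Ct g, GQ.absLt g w z r → w ∈ U

/-- `P ε` for all small ε in L. -/
def EvSOn (L : Set ℝ) (P : ℝ → Prop) : Prop :=
  ∃ ε₀ : ℝ, 0 < ε₀ ∧ ε₀ ≤ 1 ∧ ∀ ε ∈ L, 0 < ε → ε ≤ ε₀ → P ε

/-- x ∈ ℂ~ is invertible on the subpoint L. -/
def GQ.InvertibleOn (g : Gauge) {𝕜 : Type} [RCLike 𝕜] (L : Set ℝ) (x : GQ g 𝕜) : Prop :=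
  ∃ a : {u : ℝ → 𝕜 // g.Mod u}, Quotient.mk (gSetoid g 𝕜) a = x ∧
    ∃ m : ℕ, EvSOn L fun ε => g.ρ ε ^ m ≤ ‖a.1 ε‖

theorem Gauge.nmod_const (g : Gauge) (c : ℕ) : g.NMod fun _ => c := by
  refine ⟨c + 1, (g.evs_le (by positivity : (0:ℝ) < 1/(c+1))).mono fun ε hε hε1 h3 => ?_⟩
  have hρ := g.pos ε hε hε1
  show ‖((c:ℕ) : ℝ)‖ ≤ _
  rw [Real.norm_eq_abs, abs_of_nonneg (Nat.cast_nonneg _)]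
  have hc1 : (0:ℝ) < (c:ℝ) + 1 := by positivity
  calc (c:ℝ) ≤ 1 / g.ρ ε := by
        rw [le_div_iff₀ hρ]
        calc (c:ℝ) * g.ρ ε ≤ (c:ℝ) * (1/(c+1)) :=
              mul_le_mul_of_nonneg_left h3 (Nat.cast_nonneg c)
          _ ≤ 1 := by rw [mul_one_div, div_le_one hc1]; linarith
    _ = g.ρ ε ^ (-((1:ℕ):ℤ)) := by
        rw [show (-((1:ℕ):ℤ)) = (-1:ℤ) by norm_num, zpow_neg_one, one_div]
    _ ≤ g.ρ ε ^ (-((c+1:ℕ):ℤ)) := g.zpow_neg_le hε hε1 (by omega)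

theorem Gauge.SMod.shift {g : Gauge} {𝕜 : Type} [RCLike 𝕜] {A : ℕ → ℝ → 𝕜}
    (hA : g.SMod A) (N₀ : ℕ) : g.SMod fun n ε => A (n + N₀) ε := by
  intro K hK
  have h1 := hA (fun ε => N₀ + K ε) ((g.nmod_const N₀).add hK)
  have h2 := hA.range (g.nmod_const N₀)
  have h := h1.sub h2
  have heq : (fun ε => (∑ n ∈ Finset.range (N₀ + K ε + 1), A n ε) -
      ∑ n ∈ Finset.range N₀, A n ε) = fun ε => ∑ n ∈ Finset.range (K ε + 1), A (n + N₀) ε := by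
    funext ε
    have e1 : (∑ n ∈ Finset.range N₀, A n ε) + (∑ n ∈ Finset.Ico N₀ (N₀ + K ε + 1), A n ε)
        = ∑ n ∈ Finset.range (N₀ + K ε + 1), A n ε :=
      Finset.sum_range_add_sum_Ico _ (by omega)
    have e2 : ∑ n ∈ Finset.Ico N₀ (N₀ + K ε + 1), A n ε
        = ∑ n ∈ Finset.range (K ε + 1), A (N₀ + n) ε := by
      rw [Finset.sum_Ico_eq_sum_range, show N₀ + K ε + 1 - N₀ = K ε + 1 by omega]
    rw [← e1, e2]
    rw [add_sub_cancel_left]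
    exact Finset.sum_congr rfl fun n _ => by rw [Nat.add_comm]
  rwa [heq] at h


/-! The hypersum `Σ_{n=N}^{N+M} a_n` is the difference `S_{N+M} - S_{N-1}` of two partial
hypersums whose indices both lie beyond any threshold once `N` does. A convergent hypersequence
is Cauchy: `|x - s| < dρ^(q+1)` and `|y - s| < dρ^(q+1)` give `|x - y| < dρ^q`, because
`3 dρ^(q+1) ≤ dρ^q` for `ε` small. Hence these hypersums tend to `0`; the terms are the case
`M = 0`, and the shifted partial sums converge because `N ≤ N + M`. -/

namespace Gauge

theorem Negl.of_norm_le {g : Gauge} {𝕜' : Type} [RCLike 𝕜'] {x : ℝ → 𝕜'} {y : ℝ → 𝕜}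
    (hy : g.Negl y) (h : ∀ ε, ‖x ε‖ ≤ ‖y ε‖) : g.Negl x :=
  fun q => (hy q).mono fun ε _ _ hq => (h ε).trans hq

theorem Negl.norm_sub_norm {g : Gauge} {x y a b : ℝ → 𝕜} (hx : g.Negl fun ε => x ε - a ε)
    (hy : g.Negl fun ε => y ε - b ε) :
    g.Negl fun ε => ‖x ε - y ε‖ - ‖a ε - b ε‖ :=
  Negl.of_norm_le (hx.sub hy) fun ε => by
    rw [Real.norm_eq_abs, show x ε - a ε - (y ε - b ε) = (x ε - y ε) - (a ε - b ε) by ring]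
    exact abs_norm_sub_norm_le _ _

theorem evs_add_pow_succ_le_of_negl {g : Gauge} {f f' u u' : ℝ → ℝ} {m : ℕ}
    (h : EvS fun ε => f ε + g.ρ ε ^ m ≤ u ε) (hf : g.Negl fun ε => f' ε - f ε)
    (hu : g.Negl fun ε => u' ε - u ε) :
    EvS fun ε => f' ε + g.ρ ε ^ (m + 1) ≤ u' ε := by
  refine (((h.and (hf (m + 2))).and (hu (m + 2))).and
    (g.evs_le (by norm_num : (0:ℝ) < 1/3))).mono fun ε hε hε1 ⟨⟨⟨hfu, hff⟩, huu⟩, hρ⟩ => ?_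
  rw [Real.norm_eq_abs] at hff huu
  have hρm : 0 ≤ g.ρ ε ^ m := pow_nonneg (g.pos ε hε hε1).le m
  have hff' : f' ε - f ε ≤ g.ρ ε ^ m * g.ρ ε * g.ρ ε := by
    simpa only [pow_succ] using (abs_le.mp hff).2
  have huu' : -(g.ρ ε ^ m * g.ρ ε * g.ρ ε) ≤ u' ε - u ε := by
    simpa only [pow_succ] using (abs_le.mp huu).1
  rw [pow_succ]
  nlinarith [mul_le_mul_of_nonneg_left hρ hρm, mul_le_mul_of_nonneg_left hρ
    (mul_nonneg hρm (g.pos ε hε hε1).le)]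

end Gauge

theorem IsRep.negl_sub {g : Gauge} {x y : ℝ → 𝕜} {z : GQ g 𝕜} (hx : IsRep g x z)
    (hy : IsRep g y z) : g.Negl fun ε => x ε - y ε :=
  Quotient.exact (hx.2.trans hy.2.symm)

theorem exists_isRep (g : Gauge) (z : GQ g 𝕜) : ∃ x, IsRep g x z := by
  obtain ⟨⟨x, hx⟩, rfl⟩ := Quotient.exists_rep z
  exact ⟨x, hx, rfl⟩

theorem isRep_dpow (g : Gauge) (q : ℕ) : IsRep g (fun ε => g.ρ ε ^ q) (g.dpow q) :=
  ⟨_, rfl⟩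

theorem GQ.absLt_iff_of_isRep {g : Gauge} {z w : GQ g 𝕜} {r : Rt g} {x y : ℝ → 𝕜}
    {v : ℝ → ℝ} (hx : IsRep g x z) (hy : IsRep g y w) (hv : IsRep g v r) :
    GQ.absLt g z w r ↔ ∃ m : ℕ, EvS fun ε => ‖x ε - y ε‖ + g.ρ ε ^ m ≤ v ε := by
  constructor
  · rintro ⟨a, b, u, rfl, rfl, rfl, m, hm⟩
    exact ⟨m + 1, g.evs_add_pow_succ_le_of_negl hm
      (Gauge.Negl.norm_sub_norm (hx.negl_sub ⟨a.2, rfl⟩) (hy.negl_sub ⟨b.2, rfl⟩))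
      (hv.negl_sub ⟨u.2, rfl⟩)⟩
  · intro h
    exact ⟨⟨x, hx.1⟩, ⟨y, hy.1⟩, ⟨v, hv.1⟩, hx.2, hy.2, hv.2, h⟩

theorem GQ.absLt_dpow_of_absLt_dpow_succ {g : Gauge} {z w s : GQ g 𝕜} {q : ℕ}
    (hz : GQ.absLt g z s (g.dpow (q + 1))) (hw : GQ.absLt g w s (g.dpow (q + 1))) :
    GQ.absLt g z w (g.dpow q) := by
  obtain ⟨x, hx⟩ := exists_isRep g z
  obtain ⟨y, hy⟩ := exists_isRep g w
  obtain ⟨t, ht⟩ := exists_isRep g s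
  obtain ⟨m₁, h₁⟩ := (GQ.absLt_iff_of_isRep hx ht (isRep_dpow g _)).mp hz
  obtain ⟨m₂, h₂⟩ := (GQ.absLt_iff_of_isRep hy ht (isRep_dpow g _)).mp hw
  refine (GQ.absLt_iff_of_isRep hx hy (isRep_dpow g q)).mpr ⟨q + 1, ?_⟩
  refine ((h₁.and h₂).and (g.evs_le (by norm_num : (0:ℝ) < 1/3))).mono
    fun ε hε hε1 ⟨⟨hxt, hyt⟩, hρ⟩ => ?_
  have hr := (g.pos ε hε hε1).le
  have htri : ‖x ε - y ε‖ ≤ ‖x ε - t ε‖ + ‖y ε - t ε‖ := by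
    simpa only [dist_eq_norm] using dist_triangle_right (x ε) (y ε) (t ε)
  have hq : 0 ≤ g.ρ ε ^ q := pow_nonneg hr q
  rw [pow_succ] at hxt hyt ⊢
  nlinarith [pow_nonneg hr m₁, pow_nonneg hr m₂, mul_le_mul_of_nonneg_left hρ hq]

theorem HyperLim.cauchy {g : Gauge} {a : Nt g → GQ g 𝕜} {l : GQ g 𝕜} (h : HyperLim g a l)
    (q : ℕ) : ∃ M₀ : Nt g, ∀ N N' : Nt g, Nt.le g M₀ N → Nt.le g M₀ N' →
      GQ.absLt g (a N) (a N') (g.dpow q) := by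
  obtain ⟨M₀, hM₀⟩ := h (q + 1)
  exact ⟨M₀, fun N N' hN hN' => GQ.absLt_dpow_of_absLt_dpow_succ (hM₀ N hN) (hM₀ N' hN')⟩

theorem GQ.absLt_sub_zero {g : Gauge} {z w : GQ g 𝕜} {r : Rt g} (h : GQ.absLt g z w r) :
    GQ.absLt g (GQ.sub g z w) (GQ.zero g 𝕜) r := by
  obtain ⟨a, b, u, rfl, rfl, rfl, m, hm⟩ := h
  exact ⟨⟨_, a.2.sub b.2⟩, ⟨_, g.mod_const 0 (by simp)⟩, u, rfl, rfl, rfl, m,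
    hm.mono fun ε _ _ h => by simpa using h⟩

theorem Nt.mk_eq_mk_iff {g : Gauge} {a b : ℝ → ℕ} (ha : g.NMod a) (hb : g.NMod b) :
    Nt.mk g a ha = Nt.mk g b hb ↔ EvS fun ε => a ε = b ε :=
  ⟨fun h => natEqEv g (Quotient.exact h), fun h => Quotient.sound
    (g.negl_of_evs_eq (h.mono fun _ _ _ he => congrArg (fun n : ℕ => (n : ℝ)) he))⟩

theorem Nt.mk_le_mk_iff {g : Gauge} {a b : ℝ → ℕ} (ha : g.NMod a) (hb : g.NMod b) :
    Nt.le g (Nt.mk g a ha) (Nt.mk g b hb) ↔ EvS fun ε => a ε ≤ b ε := by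
  constructor
  · rintro ⟨a', b', ha', hb', h⟩
    have ea := (Nt.mk_eq_mk_iff _ _).mp ha'
    have eb := (Nt.mk_eq_mk_iff _ _).mp hb'
    exact ((h.and ea).and eb).mono fun ε _ _ ⟨⟨hle, e₁⟩, e₂⟩ => e₁ ▸ e₂ ▸ hle
  · exact fun h => ⟨_, _, rfl, rfl, h⟩

theorem Nt.le_add_right {g : Gauge} {K N M : Nt g} (h : Nt.le g K N) :
    Nt.le g K (Nt.add g N M) := by
  induction K using Quotient.ind
  induction N using Quotient.ind
  induction M using Quotient.ind
  exact (Nt.mk_le_mk_iff _ _).mpr (((Nt.mk_le_mk_iff _ _).mp h).mono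
    fun ε _ _ hle => hle.trans (Nat.le_add_right _ _))

theorem Nt.le_refl (g : Gauge) (N : Nt g) : Nt.le g N N := by
  induction N using Quotient.ind
  exact (Nt.mk_le_mk_iff _ _).mpr ⟨1, one_pos, le_rfl, fun _ _ _ => le_rfl⟩

abbrev Nt.one (g : Gauge) : Nt g := Nt.mk g (fun _ => 1) (g.nmod_const 1)

theorem Nt.add_zero (g : Gauge) (N : Nt g) :
    Nt.add g N (Nt.mk g (fun _ => 0) (g.nmod_const 0)) = N := by
  induction N using Quotient.ind
  rfl

theorem Nt.exists_eq_add_one_of_le {g : Gauge} {M₀ N : Nt g}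
    (h : Nt.le g (Nt.add g M₀ (Nt.one g)) N) :
    ∃ N' : Nt g, Nt.le g M₀ N' ∧ N = Nt.add g N' (Nt.one g) := by
  induction M₀ using Quotient.ind with | _ m₀ =>
  induction N using Quotient.ind with | _ n =>
  have hle : EvS fun ε => m₀.1 ε + 1 ≤ n.1 ε := (Nt.mk_le_mk_iff _ n.2).mp h
  refine ⟨Nt.mk g (fun ε => n.1 ε - 1) (n.2.mono fun ε => Nat.sub_le _ _),
    (Nt.mk_le_mk_iff m₀.2 _).mpr (hle.mono fun ε _ _ h => by omega),
    (Nt.mk_eq_mk_iff n.2 _).mpr (hle.mono fun ε _ _ h => by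
      show n.1 ε = n.1 ε - 1 + 1
      omega)⟩

theorem hypersum_add_one {g : Gauge} (A : ℕ → ℝ → 𝕜) (hA : g.SMod A) {N K : Nt g}
    (h : Nt.le g N K) :
    hypersum g A hA (Nt.add g N (Nt.one g)) K
      = GQ.sub g (partialSum g A hA K) (partialSum g A hA N) := by
  induction N using Quotient.ind with | _ n =>
  induction K using Quotient.ind with | _ k =>
  refine Quotient.sound (g.negl_of_evs_eq (((Nt.mk_le_mk_iff n.2 k.2).mp h).mono
    fun ε _ _ hle => ?_))
  show ∑ i ∈ Finset.Icc (n.1 ε + 1) (k.1 ε), A i ε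
    = (∑ i ∈ Finset.range (k.1 ε + 1), A i ε) - ∑ i ∈ Finset.range (n.1 ε + 1), A i ε
  rw [← Finset.sum_Ico_eq_sub _ (by omega), Finset.Ico_add_one_right_eq_Icc]

theorem hypersum_self {g : Gauge} (A : ℕ → ℝ → 𝕜) (hA : g.SMod A) (N : Nt g) :
    hypersum g A hA N N = GQ.term g A hA N := by
  induction N using Quotient.ind with | _ n =>
  refine Quotient.sound (g.negl_of_evs_eq ⟨1, one_pos, le_rfl, fun ε _ _ => ?_⟩)
  show ∑ i ∈ Finset.Icc (n.1 ε) (n.1 ε), A i ε = A (n.1 ε) ε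
  rw [Finset.Icc_self, Finset.sum_singleton]

theorem HyperLim.comp_add_right {g : Gauge} {a : Nt g → GQ g 𝕜} {l : GQ g 𝕜}
    (h : HyperLim g a l) (M : Nt g) : HyperLim g (fun N => a (Nt.add g N M)) l := by
  intro q
  obtain ⟨M₀, hM₀⟩ := h q
  exact ⟨M₀, fun N hN => hM₀ _ (Nt.le_add_right hN)⟩

theorem HSConv.hyperLim_hypersum {g : Gauge} {A : ℕ → ℝ → 𝕜} {hA : g.SMod A} {s : GQ g 𝕜}
    (h : HSConv g A hA s) (M : Nt g) :
    HyperLim g (fun N => hypersum g A hA N (Nt.add g N M)) (GQ.zero g 𝕜) := by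
  intro q
  obtain ⟨M₀, hM₀⟩ := HyperLim.cauchy h q
  refine ⟨Nt.add g M₀ (Nt.one g), fun N hN => ?_⟩
  obtain ⟨N', hN', rfl⟩ := Nt.exists_eq_add_one_of_le hN
  have hN'K : Nt.le g N' (Nt.add g (Nt.add g N' (Nt.one g)) M) :=
    Nt.le_add_right (Nt.le_add_right (Nt.le_refl g N'))
  dsimp only
  rw [hypersum_add_one A hA hN'K]
  exact GQ.absLt_sub_zero (hM₀ _ _ (Nt.le_add_right (Nt.le_add_right hN')) hN')

theorem HSConv.hyperLim_term {g : Gauge} {A : ℕ → ℝ → 𝕜} {hA : g.SMod A} {s : GQ g 𝕜}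
    (h : HSConv g A hA s) : HyperLim g (GQ.term g A hA) (GQ.zero g 𝕜) := by
  simpa only [Nt.add_zero, hypersum_self] using h.hyperLim_hypersum (Nt.mk g _ (g.nmod_const 0))

/-- if a hyperseries converges to s then the shifted partial sums converge
to s, the hypersums Σ_{n=N}^{N+M} tend to 0, and the terms tend to 0. -/
theorem stmt2 (g : Gauge) (A : ℕ → ℝ → ℂ) (hA : g.SMod A) (s : Ct g) (M : Nt g)
    (hconv : HSConv g A hA s) :
    HyperLim g (fun N => partialSum g A hA (Nt.add g N M)) s ∧
    HyperLim g (fun N => hypersum g A hA N (Nt.add g N M)) (GQ.zero g ℂ) ∧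
    HyperLim g (GQ.term g A hA) (GQ.zero g ℂ) :=
  ⟨HyperLim.comp_add_right hconv M, hconv.hyperLim_hypersum M, hconv.hyperLim_term⟩
end
end

section
/- Ratio test: let (a_n)_n = [a_{nε}]_s ∈ ℂ~_s be such that |a_n| > 0 (i.e. |a_n| is invertible in ℝ~) for all n ∈ ℕ~. Assume there are [k_ε] ∈ ℕ~ with all k_ε ∈ ℕ and L = [L_ε] ∈ ℝ~ with 0 < L < 1 such that for ε small: |a_{(n+1)ε}| ≤ L_ε |a_{nε}| for all n ∈ ℕ with n ≥ k_ε. Then (|a_{nε}|)_{n,ε} is ρ-moderate over hypersums, the hyperseries Σ_{n∈ℕ~} |a_n| converges in ℝ~, and consequently the hyperseries Σ_{n∈ℕ~} a_n converges in ℂ~. -/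
open Filter

noncomputable section

variable {𝕜 : Type} [RCLike 𝕜]

/-! Beyond the index `k` the terms decay geometrically with ratio `L ≤ 1 - dρ^m`. Hence every
term is bounded by the largest of the first `k + 1` terms, a moderate number, which makes the
partial sums of `|a_n|` moderate. Past `J = k + ⌈dρ^(-(m+1))⌉` the tail is at most
`L^(J+1-k) |a_k| / (1 - L)`, and `(1 - dρ^m)^(dρ^(-(m+1))) ≤ exp (-dρ⁻¹)` is negligible, so the
partial sums beyond `J` stay negligibly close to the one at `J`. -/

open Topology Finset

theorem evS_iff_eventually {P : ℝ → Prop} : EvS P ↔ ∀ᶠ ε in 𝓝[>] (0 : ℝ), P ε := by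
  rw [Filter.Eventually, mem_nhdsGT_iff_exists_Ioc_subset]
  constructor
  · rintro ⟨ε₀, hε₀, -, hP⟩
    exact ⟨ε₀, hε₀, fun ε hε => hP ε hε.1 hε.2⟩
  · rintro ⟨ε₀, hε₀, hP⟩
    exact ⟨min ε₀ 1, lt_min hε₀ one_pos, min_le_right _ _,
      fun ε hε hεε₀ => hP ⟨hε, hεε₀.trans (min_le_left _ _)⟩⟩

theorem EvS.eventually {P : ℝ → Prop} (h : EvS P) : ∀ᶠ ε in 𝓝[>] (0 : ℝ), P ε :=
  evS_iff_eventually.1 h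

section RatioBounds

variable {f : ℕ → ℝ} {l : ℝ} {k : ℕ}

theorem le_pow_mul_of_ratio_le (hl : 0 ≤ l) (h : ∀ n, k ≤ n → f (n + 1) ≤ l * f n) {N : ℕ}
    (hN : k ≤ N) (j : ℕ) : f (N + j) ≤ l ^ j * f N :=
  le_geom (u := fun j => f (N + j)) hl j fun i _ => h (N + i) (by omega)

theorem exists_le_of_ratio_le (hfk : 0 ≤ f k) (hl0 : 0 ≤ l) (hl1 : l ≤ 1)
    (h : ∀ n, k ≤ n → f (n + 1) ≤ l * f n) (n : ℕ) : ∃ i ≤ k, f n ≤ f i := by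
  rcases le_or_gt n k with hn | hn
  · exact ⟨n, hn, le_rfl⟩
  · obtain ⟨j, rfl⟩ := Nat.exists_eq_add_of_le hn.le
    exact ⟨k, le_rfl, (le_pow_mul_of_ratio_le hl0 h le_rfl j).trans
      (mul_le_of_le_one_left hfk (pow_le_one₀ hl0 hl1))⟩

theorem sum_Icc_le_of_ratio_le (hf : ∀ n, 0 ≤ f n) (hl0 : 0 ≤ l) (hl1 : l < 1)
    (h : ∀ n, k ≤ n → f (n + 1) ≤ l * f n) (j M : ℕ) :
    ∑ n ∈ Icc (k + j) M, f n ≤ l ^ j * f k / (1 - l) := by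
  have hgeom : ∑ i ∈ range (M + 1 - (k + j)), l ^ i ≤ 1 / (1 - l) := by
    simpa using geom_sum_Ico_le_of_lt_one (m := 0) (n := M + 1 - (k + j)) hl0 hl1
  calc ∑ n ∈ Icc (k + j) M, f n
      = ∑ i ∈ range (M + 1 - (k + j)), f (k + j + i) := by
        rw [← Ico_add_one_right_eq_Icc, sum_Ico_eq_sum_range]
    _ ≤ ∑ i ∈ range (M + 1 - (k + j)), l ^ i * f (k + j) :=
        sum_le_sum fun i _ => le_pow_mul_of_ratio_le hl0 h (Nat.le_add_right k j) i
    _ = (∑ i ∈ range (M + 1 - (k + j)), l ^ i) * f (k + j) := (sum_mul ..).symm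
    _ ≤ 1 / (1 - l) * (l ^ j * f k) := by
        gcongr
        · exact hf _
        · exact le_pow_mul_of_ratio_le hl0 h le_rfl j
    _ = l ^ j * f k / (1 - l) := by ring

end RatioBounds

namespace Gauge

theorem Mod.of_evs_norm_le {g : Gauge} {x : ℝ → 𝕜} {y : ℝ → ℝ} (hy : g.Mod y)
    (h : EvS fun ε => ‖x ε‖ ≤ ‖y ε‖) : g.Mod x := by
  obtain ⟨N, hN⟩ := hy
  exact ⟨N, (h.and hN).mono fun _ _ _ h => h.1.trans h.2⟩

variable (g : Gauge)

theorem eventually_pos : ∀ᶠ ε in 𝓝[>] (0 : ℝ), 0 < g.ρ ε :=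
  EvS.eventually ⟨1, one_pos, le_rfl, g.pos⟩

theorem tendsto_inv_atTop : Tendsto (fun ε => (g.ρ ε)⁻¹) (𝓝[>] 0) atTop :=
  tendsto_inv_nhdsGT_zero.comp (tendsto_nhdsWithin_iff.2 ⟨g.to_zero, g.eventually_pos⟩)

theorem eventually_pow_succ_le {c : ℝ} (hc : 0 < c) (q : ℕ) :
    ∀ᶠ ε in 𝓝[>] (0 : ℝ), g.ρ ε ^ (q + 1) ≤ c * g.ρ ε ^ q := by
  filter_upwards [(g.evs_le hc).eventually, g.eventually_pos] with ε hle hρ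
  rw [pow_succ, mul_comm]
  exact mul_le_mul_of_nonneg_right hle (pow_nonneg hρ.le q)

theorem nmod_ceil_inv_pow (p : ℕ) : g.NMod fun ε => ⌈(g.ρ ε)⁻¹ ^ p⌉₊ := by
  refine Mod.of_evs_norm_le ((g.mod_zpow_neg p).add (g.mod_const 1 (by simp)))
    (evS_iff_eventually.2 (g.eventually_pos.mono fun ε hρ => ?_))
  rw [zpow_neg, zpow_natCast, ← inv_pow, Real.norm_natCast, Real.norm_of_nonneg (by positivity)]
  exact (Nat.ceil_lt_add_one (by positivity)).le

variable {g}

theorem negl_pow_of_le_one_sub {l : ℝ → ℝ} {n : ℝ → ℕ} {m : ℕ}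
    (hl : EvS fun ε => 0 ≤ l ε ∧ l ε ≤ 1 - g.ρ ε ^ m)
    (hn : EvS fun ε => (g.ρ ε)⁻¹ ^ (m + 1) ≤ n ε) : g.Negl fun ε => l ε ^ n ε := by
  intro q
  have hexp : ∀ᶠ ε in 𝓝[>] (0 : ℝ), (g.ρ ε)⁻¹ ^ q * Real.exp (-(g.ρ ε)⁻¹) < 1 :=
    ((Real.tendsto_pow_mul_exp_neg_atTop_nhds_zero q).comp g.tendsto_inv_atTop).eventually_lt_const
      one_pos
  refine evS_iff_eventually.2 ?_
  filter_upwards [hl.eventually, hn.eventually, hexp, g.eventually_pos]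
    with ε ⟨hl0, hl1⟩ hnε hexpε hρ
  have hinv : (g.ρ ε)⁻¹ ≤ n ε * g.ρ ε ^ m := by
    calc (g.ρ ε)⁻¹ = (g.ρ ε)⁻¹ ^ (m + 1) * g.ρ ε ^ m := by
          rw [pow_succ', mul_assoc, ← mul_pow, inv_mul_cancel₀ hρ.ne', one_pow, mul_one]
      _ ≤ n ε * g.ρ ε ^ m := mul_le_mul_of_nonneg_right hnε (pow_nonneg hρ.le m)
  calc ‖l ε ^ n ε‖ = l ε ^ n ε := Real.norm_of_nonneg (pow_nonneg hl0 _)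
    _ ≤ Real.exp (-g.ρ ε ^ m) ^ n ε :=
        pow_le_pow_left₀ hl0 (hl1.trans (Real.one_sub_le_exp_neg _)) _
    _ = Real.exp (-(n ε * g.ρ ε ^ m)) := by rw [← Real.exp_nat_mul]; ring_nf
    _ ≤ Real.exp (-(g.ρ ε)⁻¹) := Real.exp_le_exp.2 (neg_le_neg hinv)
    _ ≤ g.ρ ε ^ q := by
        rw [inv_pow, inv_mul_lt_iff₀ (pow_pos hρ q), mul_one] at hexpε
        exact hexpε.le

end Gauge

theorem Rt.exists_pow_le_sub_of_lt {g : Gauge} {x y : ℝ → ℝ} (hx : g.Mod x) (hy : g.Mod y)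
    (h : Rt.lt g (GQ.mk g x hx) (GQ.mk g y hy)) :
    ∃ m : ℕ, EvS fun ε => g.ρ ε ^ m ≤ y ε - x ε := by
  obtain ⟨a, b, ha, hb, m, hm⟩ := h
  have hax : g.Negl fun ε => a.1 ε - x ε := Quotient.exact ha
  have hby : g.Negl fun ε => b.1 ε - y ε := Quotient.exact hb
  refine ⟨m + 1, evS_iff_eventually.2 ?_⟩
  filter_upwards [(hax (m + 1)).eventually, (hby (m + 1)).eventually, hm.eventually,
    g.eventually_pow_succ_le (c := 1 / 3) (by norm_num) m] with ε hax hby hba hρ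
  rw [Real.norm_eq_abs, abs_le] at hax hby
  linarith [hax.1, hby.2]

namespace Gauge

variable {g : Gauge}

theorem SMod.exists_forall_norm_le_of_le {A : ℕ → ℝ → 𝕜} {k : ℝ → ℕ} (hA : g.SMod A)
    (hk : g.NMod k) : ∃ N : ℕ, EvS fun ε => ∀ n ≤ k ε, ‖A n ε‖ ≤ g.ρ ε ^ (-(N : ℤ)) := by
  choose i hik hi using fun ε =>
    (Finset.range (k ε + 1)).exists_max_image (fun n => ‖A n ε‖) nonempty_range_add_one
  obtain ⟨N, hN⟩ := hA.termMod (hk.mono fun ε => Nat.lt_succ_iff.1 (mem_range.1 (hik ε)))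
  exact ⟨N, hN.mono fun ε _ _ hε n hn => (hi ε n (mem_range.2 (Nat.lt_succ_of_le hn))).trans hε⟩

theorem SMod.exists_forall_norm_le_of_ratio {A : ℕ → ℝ → 𝕜} {k : ℝ → ℕ} {L : ℝ → ℝ}
    (hA : g.SMod A) (hk : g.NMod k) (hL : EvS fun ε => 0 ≤ L ε ∧ L ε ≤ 1)
    (hratio : EvS fun ε => ∀ n : ℕ, k ε ≤ n → ‖A (n + 1) ε‖ ≤ L ε * ‖A n ε‖) :
    ∃ N : ℕ, EvS fun ε => ∀ n, ‖A n ε‖ ≤ g.ρ ε ^ (-(N : ℤ)) := by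
  obtain ⟨N, hN⟩ := hA.exists_forall_norm_le_of_le hk
  refine ⟨N, ((hN.and hL).and hratio).mono fun ε _ _ ⟨⟨hNε, hL0, hL1⟩, hr⟩ n => ?_⟩
  obtain ⟨i, hi, hni⟩ :=
    exists_le_of_ratio_le (f := fun n => ‖A n ε‖) (norm_nonneg _) hL0 hL1 hr n
  exact hni.trans (hNε i hi)

theorem smod_norm_of_forall_norm_le {A : ℕ → ℝ → 𝕜} {N : ℕ}
    (h : EvS fun ε => ∀ n, ‖A n ε‖ ≤ g.ρ ε ^ (-(N : ℤ))) : g.SMod fun n ε => ‖A n ε‖ := by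
  intro K hK
  refine Mod.of_evs_norm_le ((hK.add (g.nmod_const 1)).mul (g.mod_zpow_neg N))
    (h.mono fun ε hε hε1 hε' => ?_)
  rw [Real.norm_of_nonneg (sum_nonneg fun n _ => norm_nonneg _),
    Real.norm_of_nonneg (mul_nonneg (Nat.cast_nonneg _) (zpow_nonneg (g.pos ε hε hε1).le _))]
  simpa using sum_le_card_nsmul (range (K ε + 1)) _ _ fun n _ => hε' n

theorem hsConv_of_tail {B : ℕ → ℝ → 𝕜} (hB : g.SMod B) {J : ℝ → ℕ} (hJ : g.NMod J)
    {x : ℝ → ℝ} (hx : g.Negl x)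
    (ht : EvS fun ε => ∀ M, ∑ n ∈ Icc (J ε + 1) M, ‖B n ε‖ ≤ x ε) :
    HSConv g B hB (GQ.mk g (fun ε => ∑ n ∈ range (J ε + 1), B n ε) (hB J hJ)) := by
  intro q
  refine ⟨Nt.mk g J hJ, fun n hn => ?_⟩
  obtain ⟨a, b, ha, rfl, hab⟩ := hn
  have haJ : EvS fun ε => a.1 ε = J ε := natEqEv g (Quotient.exact ha)
  refine ⟨⟨_, hB b.1 b.2⟩, ⟨_, hB J hJ⟩, ⟨_, g.mod_pow q⟩, rfl, rfl, rfl, q + 1,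
    evS_iff_eventually.2 ?_⟩
  filter_upwards [haJ.eventually, hab.eventually, ht.eventually, (hx (q + 1)).eventually,
    g.eventually_pow_succ_le (c := 1 / 2) (by norm_num) q] with ε haε habε htε hxε hρ
  have hJb : J ε + 1 ≤ b.1 ε + 1 := by omega
  show ‖∑ n ∈ range (b.1 ε + 1), B n ε - ∑ n ∈ range (J ε + 1), B n ε‖ + _ ≤ _
  rw [← sum_Ico_eq_sub _ hJb, Ico_add_one_right_eq_Icc]
  linarith [(norm_sum_le _ _).trans (htε (b.1 ε)), Real.le_norm_self (x ε)]

theorem exists_tail_negl_of_ratio {A : ℕ → ℝ → 𝕜} {k : ℝ → ℕ} {L : ℝ → ℝ} {N m : ℕ}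
    (hk : g.NMod k) (hA : EvS fun ε => ∀ n, ‖A n ε‖ ≤ g.ρ ε ^ (-(N : ℤ)))
    (hL : EvS fun ε => 0 ≤ L ε ∧ L ε ≤ 1 - g.ρ ε ^ m)
    (hratio : EvS fun ε => ∀ n : ℕ, k ε ≤ n → ‖A (n + 1) ε‖ ≤ L ε * ‖A n ε‖) :
    ∃ J : ℝ → ℕ, g.NMod J ∧ ∃ x : ℝ → ℝ, g.Negl x ∧
      EvS fun ε => ∀ M, ∑ n ∈ Icc (J ε + 1) M, ‖A n ε‖ ≤ x ε := by
  set Q : ℝ → ℕ := fun ε => ⌈(g.ρ ε)⁻¹ ^ (m + 1)⌉₊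
  have hQ : EvS fun ε => (g.ρ ε)⁻¹ ^ (m + 1) ≤ (Q ε + 1 : ℕ) :=
    ⟨1, one_pos, le_rfl, fun ε _ _ => (Nat.le_ceil _).trans (by push_cast; linarith)⟩
  refine ⟨fun ε => k ε + Q ε, hk.add (g.nmod_ceil_inv_pow _),
    fun ε => L ε ^ (Q ε + 1) * (g.ρ ε ^ (-(N : ℤ)) * g.ρ ε ^ (-(m : ℤ))),
    (negl_pow_of_le_one_sub hL hQ).mul_mod ((g.mod_zpow_neg N).mul (g.mod_zpow_neg m)),
    ((hA.and hL).and hratio).mono fun ε hε hε1 ⟨⟨hAε, hL0, hL1⟩, hr⟩ M => ?_⟩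
  have hρm : 0 < g.ρ ε ^ m := pow_pos (g.pos ε hε hε1) m
  calc ∑ n ∈ Icc (k ε + Q ε + 1) M, ‖A n ε‖
      ≤ L ε ^ (Q ε + 1) * ‖A (k ε) ε‖ / (1 - L ε) :=
        sum_Icc_le_of_ratio_le (fun n => norm_nonneg (A n ε)) hL0 (by linarith) hr (Q ε + 1) M
    _ ≤ L ε ^ (Q ε + 1) * (g.ρ ε ^ (-(N : ℤ)) * g.ρ ε ^ (-(m : ℤ))) := by
        rw [div_eq_mul_inv, mul_assoc, zpow_neg (g.ρ ε) m, zpow_natCast]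
        exact mul_le_mul_of_nonneg_left (mul_le_mul (hAε _) (inv_anti₀ hρm (by linarith))
          (inv_nonneg.2 (by linarith)) (zpow_nonneg (g.pos ε hε hε1).le _)) (pow_nonneg hL0 _)

end Gauge

theorem stmt5_general (g : Gauge) (A : ℕ → ℝ → ℂ) (hA : g.SMod A)
    (k : ℝ → ℕ) (hk : g.NMod k) (L : ℝ → ℝ) (hLmod : g.Mod L)
    (hL0 : Rt.lt g (GQ.zero g ℝ) (GQ.mk g L hLmod))
    (hL1 : Rt.lt g (GQ.mk g L hLmod) (GQ.one g ℝ))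
    (hratio : EvS fun ε => ∀ n : ℕ, k ε ≤ n → ‖A (n + 1) ε‖ ≤ L ε * ‖A n ε‖) :
    ∃ hS : g.SMod fun n ε => ‖A n ε‖,
      (∃ t : Rt g, HSConv g (fun n ε => ‖A n ε‖) hS t) ∧
      ∃ s : Ct g, HSConv g A hA s := by
  obtain ⟨m₀, hm₀⟩ := Rt.exists_pow_le_sub_of_lt (g.mod_const (0 : ℝ) (by simp)) hLmod hL0
  obtain ⟨m, hm⟩ := Rt.exists_pow_le_sub_of_lt hLmod (g.mod_const (1 : ℝ) (by simp)) hL1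
  have hL : EvS fun ε => 0 ≤ L ε ∧ L ε ≤ 1 - g.ρ ε ^ m := (hm₀.and hm).mono
    fun ε hε hε1 ⟨h₀, h₁⟩ => ⟨by linarith [pow_pos (g.pos ε hε hε1) m₀], by linarith⟩
  obtain ⟨N, hN⟩ := hA.exists_forall_norm_le_of_ratio hk
    (hL.mono fun ε hε hε1 h => ⟨h.1, by linarith [h.2, pow_pos (g.pos ε hε hε1) m]⟩) hratio
  obtain ⟨J, hJ, x, hx, htail⟩ := Gauge.exists_tail_negl_of_ratio hk hN hL hratio
  refine ⟨Gauge.smod_norm_of_forall_norm_le hN, ⟨_, Gauge.hsConv_of_tail _ hJ hx ?_⟩,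
    _, Gauge.hsConv_of_tail hA hJ hx htail⟩
  simpa only [norm_norm] using htail

/-- ratio test for hyperseries. -/
theorem stmt5 (g : Gauge) (A : ℕ → ℝ → ℂ) (hA : g.SMod A)
    (hpos : ∀ n : Nt g, Rt.lt g (GQ.zero g ℝ) (GQ.abs g (GQ.term g A hA n)))
    (k : ℝ → ℕ) (hk : g.NMod k) (L : ℝ → ℝ) (hLmod : g.Mod L)
    (hL0 : Rt.lt g (GQ.zero g ℝ) (GQ.mk g L hLmod))
    (hL1 : Rt.lt g (GQ.mk g L hLmod) (GQ.one g ℝ))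
    (hratio : EvS fun ε => ∀ n : ℕ, k ε ≤ n → ‖A (n + 1) ε‖ ≤ L ε * ‖A n ε‖) :
    ∃ hS : g.SMod fun n ε => ‖A n ε‖,
      (∃ t : Rt g, HSConv g (fun n ε => ‖A n ε‖) hS t) ∧
      ∃ s : Ct g, HSConv g A hA s :=
  stmt5_general g A hA k hk L hLmod hL0 hL1 hratio
end
end

section
/- Exponential hyperseries: let z ∈ ℂ~ admit a representative [z_ε] = z with |z_ε| ≤ −K log ρ_ε for ε small, for some real K > 0. Then the net (z_ε^n/n!)_{n,ε} is ρ-moderate over hypersums and the hyperseries Σ_{n∈ℕ~} z^n/n! converges to e^z := [e^{z_ε}] ∈ ℂ~. -/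
open Filter

noncomputable section

variable {𝕜 : Type} [RCLike 𝕜]

/-! Write `L_ε = -log ρ_ε`. The bound `|z_ε| ≤ K L_ε` gives `e^{|z_ε|} ≤ ρ_ε^(-⌈K⌉)`, which
dominates every partial sum and `e^{z_ε}`. Once `n ≥ 2|z_ε|` the remainder after `n + 1` terms is
at most `e^{2|z_ε|} 2^(-n)`, and `2^(-n) ≤ ρ_ε^c` as soon as `n ≥ 2c L_ε`. Since `L_ε ≤ ρ_ε⁻¹`,
the hypernatural `⌈2c L_ε⌉` is moderate, and beyond it the remainder is below any prescribed
power of `ρ_ε`. -/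

theorem Gauge.neg_log_nonneg (g : Gauge) {ε : ℝ} (hε : 0 < ε) (hε1 : ε ≤ 1) :
    0 ≤ -Real.log (g.ρ ε) :=
  neg_nonneg.2 (Real.log_nonpos (g.pos ε hε hε1).le (g.le_one ε hε hε1))

theorem Gauge.mod_neg_log (g : Gauge) : g.Mod fun ε => -Real.log (g.ρ ε) := by
  refine ⟨1, 1, one_pos, le_rfl, fun ε hε hε1 => ?_⟩
  have hρ := g.pos ε hε hε1
  have hlog := Real.log_le_sub_one_of_pos (inv_pos.2 hρ)
  rw [Real.log_inv] at hlog
  show ‖-Real.log (g.ρ ε)‖ ≤ g.ρ ε ^ (-((1 : ℕ) : ℤ))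
  rw [Real.norm_of_nonneg (g.neg_log_nonneg hε hε1), Nat.cast_one, zpow_neg_one]
  linarith

theorem Gauge.nmod_ceil {g : Gauge} {x : ℝ → ℝ} (hx : g.Mod x) : g.NMod fun ε => ⌈x ε⌉₊ := by
  refine (hx.norm.add (g.mod_const (1 : ℝ) (by simp))).of_norm_le fun ε _ _ => ?_
  rw [Real.norm_natCast, abs_of_nonneg (by positivity)]
  exact (Nat.cast_le.2 (Nat.ceil_mono (le_abs_self (x ε)))).trans
    (Nat.ceil_lt_add_one (abs_nonneg _)).le

theorem exp_le_zpow_neg_of_le_mul_neg_log {ρ x : ℝ} (hρ : 0 < ρ) {k : ℕ}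
    (h : x ≤ k * -Real.log ρ) : Real.exp x ≤ ρ ^ (-(k : ℤ)) := by
  rw [zpow_neg, zpow_natCast, ← Real.exp_log hρ, ← Real.exp_nat_mul, ← Real.exp_neg]
  exact Real.exp_le_exp.2 (by linarith)

theorem half_pow_le_pow_of_le {ρ : ℝ} (hρ : 0 < ρ) {c n : ℕ}
    (h : 2 * c * -Real.log ρ ≤ n) : (1 / 2 : ℝ) ^ n ≤ ρ ^ c := by
  rw [← Real.exp_log hρ, ← Real.exp_nat_mul, one_div, ← Real.exp_log (by norm_num : (0 : ℝ) < 2),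
    ← Real.exp_neg, ← Real.exp_nat_mul]
  have hlog2 : 1 / 2 < Real.log 2 := lt_trans (by norm_num) Real.log_two_gt_d9
  refine Real.exp_le_exp.2 ?_
  nlinarith [Nat.cast_nonneg (α := ℝ) n]

theorem Gauge.mod_exp_of_le_mul_neg_log {g : Gauge} {x : ℝ → ℝ} {k : ℕ}
    (h : EvS fun ε => x ε ≤ k * -Real.log (g.ρ ε)) : g.Mod fun ε => Real.exp (x ε) :=
  ⟨k, h.mono fun ε hε hε1 hx => by
    rw [Real.norm_of_nonneg (Real.exp_pos _).le]
    exact exp_le_zpow_neg_of_le_mul_neg_log (g.pos ε hε hε1) hx⟩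

theorem norm_sum_range_pow_div_factorial_le (z : ℂ) (n : ℕ) :
    ‖∑ m ∈ Finset.range n, z ^ m / (m.factorial : ℂ)‖ ≤ Real.exp ‖z‖ := by
  refine (norm_sum_le _ _).trans (le_of_eq_of_le ?_ (Real.sum_le_exp_of_nonneg (norm_nonneg z) n))
  refine Finset.sum_congr rfl fun m _ => ?_
  rw [norm_div, norm_pow, Complex.norm_natCast]

theorem norm_exp_sub_sum_range_le (z : ℂ) {n : ℕ} (hn : 2 * ‖z‖ ≤ n + 2) :
    ‖Complex.exp z - ∑ m ∈ Finset.range (n + 1), z ^ m / (m.factorial : ℂ)‖ ≤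
      Real.exp (2 * ‖z‖) * (1 / 2) ^ n := by
  have hz : ‖z‖ / (n + 1).succ ≤ 1 / 2 := by
    rw [div_le_iff₀ (by positivity)]
    push_cast
    linarith
  refine (Complex.exp_bound' hz).trans ?_
  have hterm := Real.pow_div_factorial_le_exp _ (mul_nonneg zero_le_two (norm_nonneg z)) (n + 1)
  rw [mul_pow, mul_div_assoc] at hterm
  calc ‖z‖ ^ (n + 1) / (n + 1).factorial * 2
      = 2 ^ (n + 1) * (‖z‖ ^ (n + 1) / (n + 1).factorial) * (1 / 2) ^ n := by
        rw [pow_succ 2, one_div_pow]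
        field_simp
    _ ≤ Real.exp (2 * ‖z‖) * (1 / 2) ^ n := by gcongr

theorem norm_exp_sub_sum_range_le_pow {ρ : ℝ} (hρ : 0 < ρ) (hρ1 : ρ ≤ 1) {z : ℂ} {k q n : ℕ}
    (hz : ‖z‖ ≤ k * -Real.log ρ) (hn : ((2 * (2 * k + q + 1) : ℕ) : ℝ) * -Real.log ρ ≤ n) :
    ‖Complex.exp z - ∑ m ∈ Finset.range (n + 1), z ^ m / (m.factorial : ℂ)‖ ≤ ρ ^ (q + 1) := by
  have hL : 0 ≤ -Real.log ρ := neg_nonneg.2 (Real.log_nonpos hρ.le hρ1)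
  have h2z : 2 * ‖z‖ ≤ ((2 * k : ℕ) : ℝ) * -Real.log ρ := by push_cast; linarith
  have h2zn : 2 * ‖z‖ ≤ n + 2 := by push_cast at h2z hn; nlinarith
  calc _ ≤ Real.exp (2 * ‖z‖) * (1 / 2) ^ n := norm_exp_sub_sum_range_le z h2zn
    _ ≤ ρ ^ (-((2 * k : ℕ) : ℤ)) * ρ ^ (2 * k + q + 1) :=
        mul_le_mul (exp_le_zpow_neg_of_le_mul_neg_log hρ h2z) (half_pow_le_pow_of_le hρ (by push_cast at hn ⊢; linarith))
          (by positivity) (by positivity)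
    _ = ρ ^ (q + 1) := by
        rw [zpow_neg, zpow_natCast, add_assoc, pow_add, inv_mul_cancel_left₀ (by positivity)]

theorem Gauge.hsConv_of_eventually_norm_sub_le {g : Gauge} {A : ℕ → ℝ → 𝕜} (hA : g.SMod A)
    {s : ℝ → 𝕜} (hs : g.Mod s)
    (h : ∀ q : ℕ, ∃ M : ℝ → ℕ, g.NMod M ∧ EvS fun ε => ∀ n, M ε ≤ n →
      ‖∑ m ∈ Finset.range (n + 1), A m ε - s ε‖ ≤ g.ρ ε ^ (q + 1)) :
    HSConv g A hA (GQ.mk g s hs) := by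
  intro q
  obtain ⟨M, hM, hclose⟩ := h q
  refine ⟨Nt.mk g M hM, fun n ⟨a, b, ha, hb, hab⟩ => ?_⟩
  have haM : EvS fun ε => a.1 ε = M ε := natEqEv g (Quotient.exact ha)
  refine ⟨⟨_, hA b.1 b.2⟩, ⟨s, hs⟩, ⟨_, g.mod_pow q⟩, by rw [← hb]; rfl, rfl, rfl, q + 1, ?_⟩
  refine (((hclose.and haM).and hab).and (g.evs_le (by norm_num : (0 : ℝ) < 1 / 2))).mono
    fun ε hε hε1 ⟨⟨⟨hcl, hεM⟩, hle⟩, hhalf⟩ => ?_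
  have hρ := g.pos ε hε hε1
  calc _ ≤ g.ρ ε ^ (q + 1) + g.ρ ε ^ (q + 1) := add_le_add_left (hcl _ (hεM ▸ hle)) _
    _ = 2 * g.ρ ε * g.ρ ε ^ q := by ring
    _ ≤ g.ρ ε ^ q := by nlinarith [pow_nonneg hρ.le q]

theorem stmt8_general (g : Gauge) (zr : ℝ → ℂ) (K : ℝ)
    (hbound : EvS fun ε => ‖zr ε‖ ≤ -K * Real.log (g.ρ ε)) :
    ∃ hS : g.SMod fun n ε => zr ε ^ n / (n.factorial : ℂ),
      ∃ hexp : g.Mod fun ε => Complex.exp (zr ε),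
        HSConv g (fun n ε => zr ε ^ n / (n.factorial : ℂ)) hS (GQ.mk g _ hexp) := by
  set k := ⌈K⌉₊
  have hk : EvS fun ε => ‖zr ε‖ ≤ k * -Real.log (g.ρ ε) := hbound.mono fun ε hε hε1 hz => by
    nlinarith [Nat.le_ceil K, g.neg_log_nonneg hε hε1]
  have hexpnorm := g.mod_exp_of_le_mul_neg_log hk
  have hS : g.SMod fun n ε => zr ε ^ n / (n.factorial : ℂ) := fun _ _ =>
    hexpnorm.of_norm_le fun _ _ _ => (norm_sum_range_pow_div_factorial_le _ _).trans (le_abs_self _)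
  have hexp : g.Mod fun ε => Complex.exp (zr ε) :=
    hexpnorm.of_norm_le fun _ _ _ => (Complex.norm_exp_le_exp_norm _).trans (le_abs_self _)
  refine ⟨hS, hexp, g.hsConv_of_eventually_norm_sub_le hS hexp fun q => ?_⟩
  refine ⟨fun ε => ⌈((2 * (2 * k + q + 1) : ℕ) : ℝ) * -Real.log (g.ρ ε)⌉₊,
    g.nmod_ceil ((g.nmod_const _).mul g.mod_neg_log), hk.mono fun ε hε hε1 hz n hn => ?_⟩
  rw [norm_sub_rev]
  exact norm_exp_sub_sum_range_le_pow (g.pos ε hε hε1) (g.le_one ε hε hε1) hz (Nat.ceil_le.1 hn)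

/-- the exponential hyperseries Σ z^n/n! converges to e^z for z of
logarithmic type. -/
theorem stmt8 (g : Gauge) (z : Ct g) (zr : ℝ → ℂ) (hm : g.Mod zr)
    (hrep : GQ.mk g zr hm = z) (K : ℝ) (hK : 0 < K)
    (hbound : EvS fun ε => ‖zr ε‖ ≤ -K * Real.log (g.ρ ε)) :
    ∃ hS : g.SMod fun n ε => zr ε ^ n / (n.factorial : ℂ),
      ∃ hexp : g.Mod fun ε => Complex.exp (zr ε),
        HSConv g (fun n ε => zr ε ^ n / (n.factorial : ℂ)) hS (GQ.mk g _ hexp) :=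
  stmt8_general g zr K hbound
end
end
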